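/- Suppose the generalized eigenvalues of (Aψ, Au) = ρ(ψ, u)_W satisfy ρₖ ≤ C₀k^{-α} with α > 1, and the noise e has independent zero-mean components with variance ≤ σ². Let x_λ minimize ‖Ax − b‖² + λ‖x‖_W² where b = Ax* + e. Then there is a constant C, independent of n, λ, σ, such that 𝔼[(1/n)‖Ax_λ − Ax*‖²] ≤ Cλ(1/n)‖x*‖_W² + Cσ²/(nλ^{1/α}). -/

import Mathlib

/-!
In the `W`-orthonormal eigenbasis `ψₖ` the first-order conditions of the Tikhonov problem
decouple: the `k`-th coordinate of `x_λ - x*` is `(⟨Aψₖ, e⟩ - λ ⟨ψₖ, x*⟩_W) / (ρₖ + λ)`, while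
`‖A v‖² = ∑ ρₖ ⟨ψₖ, v⟩_W²`. Since `⟨Aψₖ, e⟩` is centred with variance at most `σ² ‖Aψₖ‖² = σ² ρₖ`,
mode `k` contributes at most `σ² (ρₖ / (ρₖ + λ))² + λ ⟨ψₖ, x*⟩_W²` to the expected error. By
Parseval the bias terms sum to `λ ‖x*‖_W²`; the variance terms are bounded by
`σ² ∑ min (1, C₀ (k+1)^(-α) / λ)`, and splitting this sum at `T = (C₀/λ)^(1/α)` (at most `T`
terms equal to `1`, then an integral-test tail) gives `O(T)`.
-/

open Matrix MeasureTheory ProbabilityTheory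

lemma sum_Ico_add_one_rpow_neg_le_of_pos {α : ℝ} (hα : 1 < α) {K : ℕ} (hK : 0 < K) (n : ℕ) :
    ∑ k ∈ Finset.Ico K n, ((k : ℝ) + 1) ^ (-α) ≤ (K : ℝ) ^ (1 - α) / (α - 1) := by
  have hKpos : (0 : ℝ) < K := by exact_mod_cast hK
  rcases le_or_gt n K with hn | hn
  · rw [Finset.Ico_eq_empty_of_le hn, Finset.sum_empty]
    exact div_nonneg (Real.rpow_nonneg hKpos.le _) (by linarith)
  have hanti : AntitoneOn (fun x : ℝ => x ^ (-α)) (Set.Icc (K : ℝ) n) := fun x hx y _ hxy =>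
    Real.rpow_le_rpow_of_nonpos (hKpos.trans_le hx.1) hxy (by linarith)
  have hint : IntegrableOn (fun x : ℝ => x ^ (-α)) (Set.Ioi (K : ℝ)) :=
    integrableOn_Ioi_rpow_of_lt (by linarith) hKpos
  calc ∑ k ∈ Finset.Ico K n, ((k : ℝ) + 1) ^ (-α)
      ≤ ∫ x in (K : ℝ)..n, x ^ (-α) := by
        simpa using hanti.sum_le_integral_Ico hn.le
    _ = ∫ x in Set.Ioc (K : ℝ) n, x ^ (-α) :=
        intervalIntegral.integral_of_le (by exact_mod_cast hn.le)
    _ ≤ ∫ x in Set.Ioi (K : ℝ), x ^ (-α) :=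
        setIntegral_mono_set hint
          (ae_restrict_of_forall_mem measurableSet_Ioi fun x hx =>
            Real.rpow_nonneg (hKpos.trans hx).le _)
          (Filter.Eventually.of_forall Set.Ioc_subset_Ioi_self)
    _ = (K : ℝ) ^ (1 - α) / (α - 1) := by
        rw [integral_Ioi_rpow_of_lt (by linarith) hKpos, neg_div, ← div_neg]
        ring_nf

lemma sum_Ico_add_one_rpow_neg_le {α : ℝ} (hα : 1 < α) (K n : ℕ) :
    ∑ k ∈ Finset.Ico K n, ((k : ℝ) + 1) ^ (-α) ≤ α / (α - 1) * ((K : ℝ) + 1) ^ (1 - α) := by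
  have hK1 : (1 : ℝ) ≤ K + 1 := by simp
  have hα1 : 0 < α - 1 := by linarith
  rcases le_or_gt n K with hn | hn
  · rw [Finset.Ico_eq_empty_of_le hn, Finset.sum_empty]
    have := Real.rpow_nonneg (zero_le_one.trans hK1) (1 - α)
    positivity
  have hhead : ((K : ℝ) + 1) ^ (-α) ≤ ((K : ℝ) + 1) ^ (1 - α) :=
    Real.rpow_le_rpow_of_exponent_le hK1 (by linarith)
  have htail := sum_Ico_add_one_rpow_neg_le_of_pos hα (Nat.succ_pos K) n
  push_cast at htail
  rw [Finset.sum_eq_sum_Ico_succ_bot hn]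
  calc ((K : ℝ) + 1) ^ (-α) + ∑ k ∈ Finset.Ico (K + 1) n, ((k : ℝ) + 1) ^ (-α)
      ≤ ((K : ℝ) + 1) ^ (1 - α) + ((K : ℝ) + 1) ^ (1 - α) / (α - 1) := add_le_add hhead htail
    _ = α / (α - 1) * ((K : ℝ) + 1) ^ (1 - α) := by field_simp; ring

lemma sum_range_min_one_mul_rpow_neg_le {α : ℝ} (hα : 1 < α) {c : ℝ} (hc : 0 < c) (n : ℕ) :
    ∑ k ∈ Finset.range n, min 1 (c * ((k : ℝ) + 1) ^ (-α)) ≤ (1 + α / (α - 1)) * c ^ (1 / α) := by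
  set T := c ^ (1 / α)
  set K := ⌊T⌋₊
  have hT : 0 < T := Real.rpow_pos_of_pos hc _
  have hcT : c = T ^ α := by
    rw [← Real.rpow_mul hc.le, one_div_mul_cancel (by linarith), Real.rpow_one]
  have hKT : (K : ℝ) ≤ T := Nat.floor_le hT.le
  have hTK : ((K : ℝ) + 1) ^ (1 - α) ≤ T ^ (1 - α) :=
    Real.rpow_le_rpow_of_nonpos hT (Nat.lt_floor_add_one T).le (by linarith)
  have hhead : ∑ k ∈ Finset.range K, min 1 (c * ((k : ℝ) + 1) ^ (-α)) ≤ T :=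
    calc _ ≤ ∑ k ∈ Finset.range K, (1 : ℝ) := Finset.sum_le_sum fun _ _ => min_le_left _ _
      _ ≤ T := by simpa using hKT
  have htail : ∑ k ∈ Finset.Ico K (max n K), min 1 (c * ((k : ℝ) + 1) ^ (-α))
      ≤ α / (α - 1) * T :=
    calc _ ≤ ∑ k ∈ Finset.Ico K (max n K), c * ((k : ℝ) + 1) ^ (-α) :=
          Finset.sum_le_sum fun _ _ => min_le_right _ _
      _ ≤ c * (α / (α - 1) * T ^ (1 - α)) := by
          rw [← Finset.mul_sum]
          gcongr
          exact (sum_Ico_add_one_rpow_neg_le hα K _).trans (by gcongr)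
      _ = α / (α - 1) * T := by
          rw [hcT, mul_left_comm, ← Real.rpow_add hT]
          norm_num
  calc ∑ k ∈ Finset.range n, min 1 (c * ((k : ℝ) + 1) ^ (-α))
      ≤ ∑ k ∈ Finset.range (max n K), min 1 (c * ((k : ℝ) + 1) ^ (-α)) :=
        Finset.sum_le_sum_of_subset_of_nonneg (by simp)
          fun _ _ _ => le_min zero_le_one (by positivity)
    _ = ∑ k ∈ Finset.range K, min 1 (c * ((k : ℝ) + 1) ^ (-α))
        + ∑ k ∈ Finset.Ico K (max n K), min 1 (c * ((k : ℝ) + 1) ^ (-α)) :=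
        (Finset.sum_range_add_sum_Ico _ (le_max_right n K)).symm
    _ ≤ (1 + α / (α - 1)) * T := by linarith

lemma sq_div_add_le_min {ρ lam : ℝ} (hρ : 0 ≤ ρ) (hlam : 0 < lam) :
    (ρ / (ρ + lam)) ^ 2 ≤ min 1 (ρ / lam) := by
  have h0 : 0 ≤ ρ / (ρ + lam) := by positivity
  have h1 : ρ / (ρ + lam) ≤ 1 := (div_le_one (by positivity)).2 (by linarith)
  have hsq : (ρ / (ρ + lam)) ^ 2 ≤ ρ / (ρ + lam) := by nlinarith
  exact le_min (hsq.trans h1) (hsq.trans (div_le_div_of_nonneg_left hρ hlam (by linarith)))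

lemma sum_sq_div_add_le_of_le_rpow {n : ℕ} {ρ : Fin n → ℝ} {C₀ α lam : ℝ} (hC₀ : 0 < C₀)
    (hα : 1 < α) (hlam : 0 < lam) (hρ : ∀ k, 0 ≤ ρ k)
    (hdecay : ∀ k : Fin n, ρ k ≤ C₀ * ((k : ℝ) + 1) ^ (-α)) :
    ∑ k, (ρ k / (ρ k + lam)) ^ 2 ≤ (1 + α / (α - 1)) * (C₀ / lam) ^ (1 / α) := by
  calc ∑ k, (ρ k / (ρ k + lam)) ^ 2
      ≤ ∑ k : Fin n, min 1 (C₀ / lam * ((k : ℕ) + 1 : ℝ) ^ (-α)) := by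
        refine Finset.sum_le_sum fun k _ => (sq_div_add_le_min (hρ k) hlam).trans ?_
        rw [div_mul_eq_mul_div]
        gcongr
        exact hdecay k
    _ = ∑ k ∈ Finset.range n, min 1 (C₀ / lam * ((k : ℝ) + 1) ^ (-α)) :=
        Fin.sum_univ_eq_sum_range (fun k : ℕ => min 1 (C₀ / lam * ((k : ℝ) + 1) ^ (-α))) n
    _ ≤ (1 + α / (α - 1)) * (C₀ / lam) ^ (1 / α) :=
        sum_range_min_one_mul_rpow_neg_le hα (div_pos hC₀ hlam) n

lemma eq_zero_of_forall_mul_add_mul_sq_nonneg {a c : ℝ} (h : ∀ t : ℝ, 0 ≤ a * t + c * t ^ 2) :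
    a = 0 := by
  set s := 1 / (|c| + 1)
  have hs : 0 < s := by positivity
  have hcs : c * s < 1 := by
    rw [mul_one_div, div_lt_one (by positivity)]
    linarith [le_abs_self c]
  have ht := h (-a * s)
  have hpos : 0 < s * (1 - c * s) := mul_pos hs (by linarith)
  have : a ^ 2 * (s * (1 - c * s)) ≤ 0 := by linarith
  exact pow_eq_zero_iff two_ne_zero |>.1 <| le_antisymm (by nlinarith) (sq_nonneg a)

lemma Matrix.IsSymm.dotProduct_mulVec_comm {ι R : Type*} [Fintype ι] [CommSemiring R]
    {W : Matrix ι ι R} (hW : W.IsSymm) (u v : ι → R) : u ⬝ᵥ W *ᵥ v = v ⬝ᵥ W *ᵥ u := by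
  rw [dotProduct_mulVec, ← mulVec_transpose, hW.eq, dotProduct_comm]

lemma Matrix.dotProduct_transpose_mul_mulVec {m ι R : Type*} [Fintype m] [Fintype ι]
    [CommSemiring R] (A : Matrix m ι R) (u v : ι → R) :
    u ⬝ᵥ (Aᵀ * A) *ᵥ v = A *ᵥ u ⬝ᵥ A *ᵥ v := by
  rw [← mulVec_mulVec, dotProduct_mulVec, vecMul_transpose]

section Tikhonov

variable {m ι κ : Type*} [Fintype m] [Fintype ι]
  {A : Matrix m ι ℝ} {W : Matrix ι ι ℝ} {lam : ℝ}

lemma tikhonov_normal_equation {b : m → ℝ} {x₀ : ι → ℝ} (hW : W.IsSymm)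
    (hmin : ∀ x, (A *ᵥ x₀ - b) ⬝ᵥ (A *ᵥ x₀ - b) + lam * (x₀ ⬝ᵥ W *ᵥ x₀) ≤
      (A *ᵥ x - b) ⬝ᵥ (A *ᵥ x - b) + lam * (x ⬝ᵥ W *ᵥ x)) (u : ι → ℝ) :
    A *ᵥ u ⬝ᵥ (A *ᵥ x₀ - b) + lam * (u ⬝ᵥ W *ᵥ x₀) = 0 := by
  set r := A *ᵥ x₀ - b
  have hexpand : ∀ t : ℝ, (A *ᵥ (x₀ + t • u) - b) ⬝ᵥ (A *ᵥ (x₀ + t • u) - b)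
      + lam * ((x₀ + t • u) ⬝ᵥ W *ᵥ (x₀ + t • u)) = r ⬝ᵥ r + lam * (x₀ ⬝ᵥ W *ᵥ x₀)
      + 2 * (A *ᵥ u ⬝ᵥ r + lam * (u ⬝ᵥ W *ᵥ x₀)) * t
      + (A *ᵥ u ⬝ᵥ A *ᵥ u + lam * (u ⬝ᵥ W *ᵥ u)) * t ^ 2 := fun t => by
    rw [mulVec_add, mulVec_smul, add_sub_right_comm]
    simp only [add_dotProduct, dotProduct_add, smul_dotProduct, dotProduct_smul, mulVec_add,
      mulVec_smul, smul_eq_mul]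
    rw [dotProduct_comm r (A *ᵥ u), hW.dotProduct_mulVec_comm x₀ u]
    ring
  have h := eq_zero_of_forall_mul_add_mul_sq_nonneg
    (a := 2 * (A *ᵥ u ⬝ᵥ r + lam * (u ⬝ᵥ W *ᵥ x₀)))
    (c := A *ᵥ u ⬝ᵥ A *ᵥ u + lam * (u ⬝ᵥ W *ᵥ u)) fun t => by
    have := hmin (x₀ + t • u)
    rw [hexpand] at this
    linarith
  linarith

variable {ρ : κ → ℝ} {ψ : κ → ι → ℝ}

lemma mulVec_dotProduct_mulVec_of_eigvec (hW : W.IsSymm)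
    (heig : ∀ k, (Aᵀ * A) *ᵥ ψ k = ρ k • W *ᵥ ψ k) (k : κ) (v : ι → ℝ) :
    A *ᵥ ψ k ⬝ᵥ A *ᵥ v = ρ k * (ψ k ⬝ᵥ W *ᵥ v) := by
  rw [dotProduct_comm, ← dotProduct_transpose_mul_mulVec, heig, dotProduct_smul, smul_eq_mul,
    hW.dotProduct_mulVec_comm]

lemma dotProduct_mulVec_self_eq_sum_sq [Fintype κ] (hW : W.IsSymm)
    (hcomp : ∀ v, v = ∑ k, (ψ k ⬝ᵥ W *ᵥ v) • ψ k) (v : ι → ℝ) :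
    v ⬝ᵥ W *ᵥ v = ∑ k, (ψ k ⬝ᵥ W *ᵥ v) ^ 2 := by
  calc v ⬝ᵥ W *ᵥ v = v ⬝ᵥ W *ᵥ ∑ k, (ψ k ⬝ᵥ W *ᵥ v) • ψ k := by rw [← hcomp v]
    _ = ∑ k, (ψ k ⬝ᵥ W *ᵥ v) ^ 2 := by
      simp only [mulVec_sum, dotProduct_sum, mulVec_smul, dotProduct_smul, smul_eq_mul,
        hW.dotProduct_mulVec_comm v, sq]

lemma mulVec_dotProduct_self_eq_sum [Fintype κ] (hW : W.IsSymm)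
    (heig : ∀ k, (Aᵀ * A) *ᵥ ψ k = ρ k • W *ᵥ ψ k)
    (hcomp : ∀ v, v = ∑ k, (ψ k ⬝ᵥ W *ᵥ v) • ψ k) (v : ι → ℝ) :
    A *ᵥ v ⬝ᵥ A *ᵥ v = ∑ k, ρ k * (ψ k ⬝ᵥ W *ᵥ v) ^ 2 := by
  calc A *ᵥ v ⬝ᵥ A *ᵥ v = A *ᵥ (∑ k, (ψ k ⬝ᵥ W *ᵥ v) • ψ k) ⬝ᵥ A *ᵥ v := by rw [← hcomp v]
    _ = ∑ k, ρ k * (ψ k ⬝ᵥ W *ᵥ v) ^ 2 := by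
      simp only [mulVec_sum, sum_dotProduct, mulVec_smul, smul_dotProduct, smul_eq_mul,
        mulVec_dotProduct_mulVec_of_eigvec hW heig]
      exact Finset.sum_congr rfl fun k _ => by ring

lemma tikhonov_error_eq [Fintype κ] (hW : W.IsSymm)
    (heig : ∀ k, (Aᵀ * A) *ᵥ ψ k = ρ k • W *ᵥ ψ k)
    (hcomp : ∀ v, v = ∑ k, (ψ k ⬝ᵥ W *ᵥ v) • ψ k) (hρlam : ∀ k, ρ k + lam ≠ 0)
    {xstar x₀ : ι → ℝ} {ε : m → ℝ}
    (hmin : ∀ x, (A *ᵥ x₀ - (A *ᵥ xstar + ε)) ⬝ᵥ (A *ᵥ x₀ - (A *ᵥ xstar + ε)) +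
        lam * (x₀ ⬝ᵥ W *ᵥ x₀) ≤
      (A *ᵥ x - (A *ᵥ xstar + ε)) ⬝ᵥ (A *ᵥ x - (A *ᵥ xstar + ε)) + lam * (x ⬝ᵥ W *ᵥ x)) :
    (A *ᵥ x₀ - A *ᵥ xstar) ⬝ᵥ (A *ᵥ x₀ - A *ᵥ xstar) =
      ∑ k, ρ k / (ρ k + lam) ^ 2 * (A *ᵥ ψ k ⬝ᵥ ε - lam * (ψ k ⬝ᵥ W *ᵥ xstar)) ^ 2 := by
  have hcoord : ∀ k, ψ k ⬝ᵥ W *ᵥ (x₀ - xstar) =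
      (A *ᵥ ψ k ⬝ᵥ ε - lam * (ψ k ⬝ᵥ W *ᵥ xstar)) / (ρ k + lam) := fun k => by
    have h := tikhonov_normal_equation hW hmin (ψ k)
    rw [dotProduct_sub, dotProduct_add, mulVec_dotProduct_mulVec_of_eigvec hW heig,
      mulVec_dotProduct_mulVec_of_eigvec hW heig] at h
    rw [eq_div_iff (hρlam k), mulVec_sub, dotProduct_sub]
    linarith
  rw [← mulVec_sub, mulVec_dotProduct_self_eq_sum hW heig hcomp]
  refine Finset.sum_congr rfl fun k _ => ?_
  rw [hcoord, div_pow]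
  ring

end Tikhonov

section Noise

variable {Ω m : Type*} [MeasureSpace Ω] [Fintype m] {e : m → Ω → ℝ} {σ : ℝ}

lemma memLp_dotProduct (hL2 : ∀ i, MemLp (e i) 2 ℙ) (g : m → ℝ) :
    MemLp (fun ω => g ⬝ᵥ fun i => e i ω) 2 ℙ :=
  memLp_finsetSum _ fun i _ => (hL2 i).const_mul (g i)

variable [IsProbabilityMeasure (ℙ : Measure Ω)]

lemma variance_dotProduct_le (hindep : iIndepFun e ℙ) (hL2 : ∀ i, MemLp (e i) 2 ℙ)
    (hmean : ∀ i, ∫ ω, e i ω ∂ℙ = 0) (hvar : ∀ i, ∫ ω, e i ω ^ 2 ∂ℙ ≤ σ ^ 2) (g : m → ℝ) :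
    Var[fun ω => g ⬝ᵥ fun i => e i ω; ℙ] ≤ σ ^ 2 * (g ⬝ᵥ g) := by
  have hsum : (fun ω => g ⬝ᵥ fun i => e i ω) = ∑ i, fun ω => g i * e i ω := by
    ext ω; simp [dotProduct]
  have hvar_e : ∀ i, Var[e i; ℙ] ≤ σ ^ 2 := fun i => by
    rw [variance_eq_sub (hL2 i), hmean i]
    simpa using hvar i
  rw [hsum, IndepFun.variance_sum (fun i _ => (hL2 i).const_mul (g i))
    fun i _ j _ hij => (hindep.indepFun hij).comp (measurable_const_mul _) (measurable_const_mul _)]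
  simp only [variance_const_mul, dotProduct, Finset.mul_sum]
  exact Finset.sum_le_sum fun i _ => by nlinarith [hvar_e i, sq_nonneg (g i)]

lemma integral_dotProduct_sub_sq_le (hindep : iIndepFun e ℙ) (hL2 : ∀ i, MemLp (e i) 2 ℙ)
    (hmean : ∀ i, ∫ ω, e i ω ∂ℙ = 0) (hvar : ∀ i, ∫ ω, e i ω ^ 2 ∂ℙ ≤ σ ^ 2)
    (g : m → ℝ) (a : ℝ) :
    ∫ ω, ((g ⬝ᵥ fun i => e i ω) - a) ^ 2 ∂ℙ ≤ σ ^ 2 * (g ⬝ᵥ g) + a ^ 2 := by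
  have hX := memLp_dotProduct hL2 g
  have hmeanX : ∫ ω, (g ⬝ᵥ fun i => e i ω) ∂ℙ = 0 := by
    simp only [dotProduct]
    rw [integral_finsetSum _ fun i _ => ((hL2 i).integrable one_le_two).const_mul _]
    simp [integral_const_mul, hmean]
  have h := variance_eq_sub (X := fun ω => (g ⬝ᵥ fun i => e i ω) - a) (hX.sub (memLp_const a))
  rw [variance_sub_const hX.aestronglyMeasurable, integral_sub (hX.integrable one_le_two)
    (integrable_const a), hmeanX, integral_const] at h
  have hVar := variance_dotProduct_le hindep hL2 hmean hvar g
  simp only [Pi.pow_apply, probReal_univ, smul_eq_mul, one_mul] at h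
  linarith

end Noise

lemma div_add_sq_mul_add_le {ρ lam s c : ℝ} (hρ : 0 ≤ ρ) (hlam : 0 < lam) :
    ρ / (ρ + lam) ^ 2 * (s * ρ + lam ^ 2 * c ^ 2) ≤ s * (ρ / (ρ + lam)) ^ 2 + lam * c ^ 2 := by
  have hpos : 0 < ρ + lam := by linarith
  have hsplit : ρ / (ρ + lam) ^ 2 * (s * ρ + lam ^ 2 * c ^ 2) =
      s * (ρ / (ρ + lam)) ^ 2 + lam * c ^ 2 * (ρ * lam / (ρ + lam) ^ 2) := by
    field_simp
  have hle : ρ * lam / (ρ + lam) ^ 2 ≤ 1 := (div_le_one (by positivity)).2 (by nlinarith)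
  rw [hsplit]
  nlinarith [mul_le_mul_of_nonneg_left hle (by positivity : 0 ≤ lam * c ^ 2)]

theorem integral_tikhonov_error_le {Ω m ι κ : Type*} [MeasureSpace Ω]
    [IsProbabilityMeasure (ℙ : Measure Ω)] [Fintype m] [Fintype ι] [Fintype κ]
    {A : Matrix m ι ℝ} {W : Matrix ι ι ℝ} {ρ : κ → ℝ} {ψ : κ → ι → ℝ} (hW : W.IsSymm)
    (hρ : ∀ k, 0 ≤ ρ k) (heig : ∀ k, (Aᵀ * A) *ᵥ ψ k = ρ k • W *ᵥ ψ k)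
    (hnorm : ∀ k, ψ k ⬝ᵥ W *ᵥ ψ k = 1) (hcomp : ∀ v, v = ∑ k, (ψ k ⬝ᵥ W *ᵥ v) • ψ k)
    {e : m → Ω → ℝ} {σ : ℝ} (hindep : iIndepFun e ℙ) (hL2 : ∀ i, MemLp (e i) 2 ℙ)
    (hmean : ∀ i, ∫ ω, e i ω ∂ℙ = 0) (hvar : ∀ i, ∫ ω, e i ω ^ 2 ∂ℙ ≤ σ ^ 2)
    {lam : ℝ} (hlam : 0 < lam) {xstar : ι → ℝ} {xlam : Ω → ι → ℝ}
    (hmin : ∀ ω x,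
      (A *ᵥ xlam ω - (A *ᵥ xstar + fun i => e i ω)) ⬝ᵥ
          (A *ᵥ xlam ω - (A *ᵥ xstar + fun i => e i ω)) + lam * (xlam ω ⬝ᵥ W *ᵥ xlam ω) ≤
        (A *ᵥ x - (A *ᵥ xstar + fun i => e i ω)) ⬝ᵥ (A *ᵥ x - (A *ᵥ xstar + fun i => e i ω)) +
          lam * (x ⬝ᵥ W *ᵥ x)) :
    ∫ ω, (A *ᵥ xlam ω - A *ᵥ xstar) ⬝ᵥ (A *ᵥ xlam ω - A *ᵥ xstar) ∂ℙ ≤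
      σ ^ 2 * ∑ k, (ρ k / (ρ k + lam)) ^ 2 + lam * (xstar ⬝ᵥ W *ᵥ xstar) := by
  have hρlam : ∀ k, ρ k + lam ≠ 0 := fun k => (add_pos_of_nonneg_of_pos (hρ k) hlam).ne'
  have hAψ : ∀ k, A *ᵥ ψ k ⬝ᵥ A *ᵥ ψ k = ρ k := fun k => by
    rw [mulVec_dotProduct_mulVec_of_eigvec hW heig, hnorm, mul_one]
  have hint : ∀ k, Integrable (fun ω =>
      ((A *ᵥ ψ k ⬝ᵥ fun i => e i ω) - lam * (ψ k ⬝ᵥ W *ᵥ xstar)) ^ 2) ℙ := fun k =>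
    ((memLp_dotProduct hL2 _).sub (memLp_const _)).integrable_sq
  calc ∫ ω, (A *ᵥ xlam ω - A *ᵥ xstar) ⬝ᵥ (A *ᵥ xlam ω - A *ᵥ xstar) ∂ℙ
      = ∫ ω, ∑ k, ρ k / (ρ k + lam) ^ 2 *
          ((A *ᵥ ψ k ⬝ᵥ fun i => e i ω) - lam * (ψ k ⬝ᵥ W *ᵥ xstar)) ^ 2 ∂ℙ :=
        integral_congr_ae (ae_of_all _ fun ω => tikhonov_error_eq hW heig hcomp hρlam (hmin ω))
    _ = ∑ k, ρ k / (ρ k + lam) ^ 2 *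
          ∫ ω, ((A *ᵥ ψ k ⬝ᵥ fun i => e i ω) - lam * (ψ k ⬝ᵥ W *ᵥ xstar)) ^ 2 ∂ℙ := by
        rw [integral_finsetSum _ fun k _ => (hint k).const_mul _]
        simp only [integral_const_mul]
    _ ≤ ∑ k, ρ k / (ρ k + lam) ^ 2 * (σ ^ 2 * ρ k + lam ^ 2 * (ψ k ⬝ᵥ W *ᵥ xstar) ^ 2) := by
        gcongr with k
        · exact div_nonneg (hρ k) (sq_nonneg _)
        · simpa only [hAψ, mul_pow] using
            integral_dotProduct_sub_sq_le hindep hL2 hmean hvar (A *ᵥ ψ k)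
              (lam * (ψ k ⬝ᵥ W *ᵥ xstar))
    _ ≤ ∑ k, (σ ^ 2 * (ρ k / (ρ k + lam)) ^ 2 + lam * (ψ k ⬝ᵥ W *ᵥ xstar) ^ 2) :=
        Finset.sum_le_sum fun k _ => div_add_sq_mul_add_le (hρ k) hlam
    _ = σ ^ 2 * ∑ k, (ρ k / (ρ k + lam)) ^ 2 + lam * (xstar ⬝ᵥ W *ᵥ xstar) := by
        rw [Finset.sum_add_distrib, ← Finset.mul_sum, ← Finset.mul_sum,
          dotProduct_mulVec_self_eq_sum_sq hW hcomp]

/-- Expectation bound for the output error of Tikhonov regularization under polynomial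
eigenvalue decay and independent zero-mean bounded-variance noise:
`𝔼[(1/n)‖Ax_λ − Ax*‖²] ≤ Cλ(1/n)‖x*‖_W² + Cσ²/(nλ^{1/α})`, with `C` independent of
`n`, `λ`, `σ`. -/
theorem stmt7 (C₀ α : ℝ) (hC₀ : 0 < C₀) (hα : 1 < α) :
    ∃ C > (0 : ℝ),
      ∀ (Ω : Type) (_ : MeasureSpace Ω), IsProbabilityMeasure (ℙ : Measure Ω) →
      ∀ (n : ℕ), 0 < n →
      ∀ (A W : Matrix (Fin n) (Fin n) ℝ), W.PosDef →
      ∀ (ρ : Fin n → ℝ) (ψ : Fin n → (Fin n → ℝ)),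
        (∀ k, 0 ≤ ρ k) →
        (∀ k, (Aᵀ * A).mulVec (ψ k) = ρ k • W.mulVec (ψ k)) →
        (∀ i j, ψ i ⬝ᵥ W.mulVec (ψ j) = if i = j then 1 else 0) →
        (∀ v : Fin n → ℝ, v = ∑ k, (ψ k ⬝ᵥ W.mulVec v) • ψ k) →
        (∀ k : Fin n, ρ k ≤ C₀ * ((k : ℝ) + 1) ^ (-α)) →
      ∀ (e : Fin n → Ω → ℝ) (σ : ℝ), 0 ≤ σ →
        iIndepFun e ℙ →
        (∀ i, MemLp (e i) 2 ℙ) →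
        (∀ i, ∫ ω, e i ω ∂ℙ = 0) →
        (∀ i, ∫ ω, (e i ω) ^ 2 ∂ℙ ≤ σ ^ 2) →
      ∀ (lam : ℝ), 0 < lam →
      ∀ (xstar : Fin n → ℝ) (xlam : Ω → Fin n → ℝ),
        (∀ ω, ∀ x : Fin n → ℝ,
          (A.mulVec (xlam ω) - (A.mulVec xstar + fun i => e i ω)) ⬝ᵥ
              (A.mulVec (xlam ω) - (A.mulVec xstar + fun i => e i ω)) +
            lam * (xlam ω ⬝ᵥ W.mulVec (xlam ω)) ≤
          (A.mulVec x - (A.mulVec xstar + fun i => e i ω)) ⬝ᵥ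
              (A.mulVec x - (A.mulVec xstar + fun i => e i ω)) +
            lam * (x ⬝ᵥ W.mulVec x)) →
        ∫ ω, (1 / (n : ℝ)) *
            ((A.mulVec (xlam ω) - A.mulVec xstar) ⬝ᵥ (A.mulVec (xlam ω) - A.mulVec xstar)) ∂ℙ ≤
          C * lam * ((1 / (n : ℝ)) * (xstar ⬝ᵥ W.mulVec xstar)) +
          C * σ ^ 2 / ((n : ℝ) * lam ^ (1 / α)) := by
  refine ⟨max 1 ((1 + α / (α - 1)) * C₀ ^ (1 / α)), lt_max_of_lt_left one_pos, ?_⟩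
  intro Ω _ _ n _ A W hW ρ ψ hρ heig horth hcomp hdecay e σ _ hindep hL2 hmean hvar lam hlam
    xstar xlam hmin
  set C := max 1 ((1 + α / (α - 1)) * C₀ ^ (1 / α))
  have hWsymm : W.IsSymm := isHermitian_iff_isSymm.1 hW.isHermitian
  have hbv := integral_tikhonov_error_le hWsymm hρ heig (fun k => by simpa using horth k k)
    hcomp hindep hL2 hmean hvar hlam hmin
  have hdim := sum_sq_div_add_le_of_le_rpow hC₀ hα hlam hρ hdecay
  rw [Real.div_rpow hC₀.le hlam.le, ← mul_div_assoc] at hdim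
  have hP : 0 ≤ xstar ⬝ᵥ W *ᵥ xstar := by
    simpa using hW.posSemidef.dotProduct_mulVec_nonneg xstar
  rw [integral_const_mul]
  calc 1 / (n : ℝ) * ∫ ω, (A *ᵥ xlam ω - A *ᵥ xstar) ⬝ᵥ (A *ᵥ xlam ω - A *ᵥ xstar)
      ≤ 1 / (n : ℝ) * (σ ^ 2 * ((1 + α / (α - 1)) * C₀ ^ (1 / α) / lam ^ (1 / α))
          + lam * (xstar ⬝ᵥ W *ᵥ xstar)) := by
        gcongr
        exact hbv.trans (by gcongr)
    _ ≤ 1 / (n : ℝ) * (σ ^ 2 * (C / lam ^ (1 / α)) + C * (lam * (xstar ⬝ᵥ W *ᵥ xstar))) := by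
        gcongr 1 / (n : ℝ) * (σ ^ 2 * (?_ / _) + ?_)
        · exact le_max_right _ _
        · exact le_mul_of_one_le_left (by positivity) (le_max_left _ _)
    _ = _ := by ring
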